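/- arXiv:2408.15315 — 5 statements merged into one kernel-verified Lean document; each statement's English description precedes it below -/
import Mathlib

section
/- Let a₁, a₂, b be real numbers with a₁ ≥ 0, a₂ ≥ 0, a₂ ≥ a₁, and a₁ + a₂ − 2b > 0. Then the smaller eigenvalue (a₁ + 2b − a₂ − √((a₁+2b−a₂)² + 4(a₁−b)² + 4a₁(a₂−a₁)))/2 of the matrix with entries S₁₁ = a₁, S₁₂ = S₂₁ = b, S₂₂ = 2b − a₂ is strictly negative. -/
/-- The smaller eigenvalue of the Hessian in Michel's theorem is strictly negative
when `a₂ ≥ a₁` and the two fixed points are distinct (`a₁ + a₂ - 2b > 0`). -/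
theorem stmt_1 (a₁ a₂ b : ℝ) (ha₁ : 0 ≤ a₁) (ha₂ : 0 ≤ a₂) (h12 : a₁ ≤ a₂)
    (hne : 0 < a₁ + a₂ - 2*b) :
    (a₁ + 2*b - a₂ - Real.sqrt ((a₁ + 2*b - a₂)^2 + 4*(a₁ - b)^2 + 4*a₁*(a₂ - a₁))) / 2 < 0 := by
  set c := a₁ + 2*b - a₂ with hc
  set D := c^2 + 4*(a₁ - b)^2 + 4*a₁*(a₂ - a₁) with hD
  have hrest : 0 ≤ 4*(a₁ - b)^2 + 4*a₁*(a₂ - a₁) := by nlinarith [sq_nonneg (a₁ - b), mul_nonneg ha₁ (sub_nonneg.2 h12)]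
  have hDnn : 0 ≤ D := by nlinarith [sq_nonneg c]
  rcases lt_or_ge c 0 with hcn | hcp
  · have := Real.sqrt_nonneg D
    linarith
  · -- need strict: rest > 0
    have hrest' : 0 < 4*(a₁ - b)^2 + 4*(a₁*(a₂ - a₁)) := by
      rcases (lt_or_eq_of_le hrest) with h | h
      · linarith [h]
      · exfalso
        have h1 : (a₁ - b)^2 = 0 ∧ a₁*(a₂ - a₁) = 0 := by
          constructor <;> nlinarith [sq_nonneg (a₁ - b), mul_nonneg ha₁ (sub_nonneg.2 h12)]
        have hb : b = a₁ := by nlinarith [h1.1]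
        rcases mul_eq_zero.1 h1.2 with h2 | h2
        · -- a₁ = 0, b = 0, c = -a₂ ≥ 0 but also a₂ > 0
          nlinarith
        · nlinarith
    have hlt : c^2 < D := by rw [hD]; nlinarith
    have : c < Real.sqrt D := by
      have := Real.lt_sqrt hcp (y := D)
      rw [this]
      nlinarith
    linarith
end

section
/- For every integer N ≥ 1 and every symmetric matrix h ∈ ℝ^{N×N} with h ≠ 0, the quadratic form (h,h)_λ = ((N+6)/(N+8)) Σᵢⱼ hᵢⱼ² − (1/(N+8)) (Σᵢ hᵢᵢ)² is strictly positive. Equivalently, (h,h)_λ = ((N+6)/(N+8)) Σ_{i≠j} hᵢⱼ² + (6/(N+8)) Σᵢ hᵢᵢ² + (1/(N+8)) Σ_{i>j} (hᵢᵢ − hⱼⱼ)². -/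
open Finset

lemma aux_split {N : ℕ} (f : Fin N → ℝ) (i : Fin N) :
    ∑ j, f j = f i + ∑ j ∈ univ.filter (fun j => j < i), f j
      + ∑ j ∈ univ.filter (fun j => i < j), f j := by
  have h1 : (univ.filter (fun j : Fin N => j ≠ i))
      = univ.filter (fun j => j < i) ∪ univ.filter (fun j => i < j) := by
    ext j
    simp only [mem_filter, mem_union, mem_univ, true_and]
    exact ne_iff_lt_or_gt
  have h2 : Disjoint (univ.filter (fun j : Fin N => j < i))
      (univ.filter (fun j : Fin N => i < j)) := by
    rw [Finset.disjoint_left]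
    intro j hj hj'
    simp only [mem_filter] at hj hj'
    exact absurd (hj.2.trans hj'.2) (lt_irrefl j)
  have h3 : ∑ j ∈ univ.filter (fun j : Fin N => j ≠ i), f j
      = ∑ j ∈ univ.filter (fun j => j < i), f j
        + ∑ j ∈ univ.filter (fun j => i < j), f j := by
    rw [h1, Finset.sum_union h2]
  rw [add_assoc, ← h3, Finset.filter_ne', Finset.add_sum_erase _ _ (mem_univ i)]

lemma aux_sym {N : ℕ} (a : Fin N → ℝ) :
    ∑ i, ∑ j ∈ univ.filter (fun j => i < j), (a i - a j)^2
      = ∑ i, ∑ j ∈ univ.filter (fun j => j < i), (a i - a j)^2 := by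
  rw [Finset.sum_comm' (s := univ) (t := fun i => univ.filter (fun j => i < j))
      (t' := univ) (s' := fun j => univ.filter (fun i => i < j)) (by intro x y; simp)]
  exact Finset.sum_congr rfl fun j _ => Finset.sum_congr rfl fun i _ => by ring

lemma aux_full {N : ℕ} (a : Fin N → ℝ) :
    ∑ i, ∑ j, (a i - a j)^2 = 2*((N:ℝ) * ∑ i, a i^2 - (∑ i, a i)^2) := by
  have e : ∀ i j : Fin N, (a i - a j)^2 = a i^2 + a j^2 - 2*(a i * a j) := fun i j => by ring
  simp_rw [e, Finset.sum_sub_distrib, Finset.sum_add_distrib, Finset.sum_const,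
    Finset.card_univ, Fintype.card_fin, nsmul_eq_mul, ← Finset.mul_sum, ← Finset.sum_mul]
  ring

lemma aux_key {N : ℕ} (a : Fin N → ℝ) :
    ∑ i, ∑ j ∈ univ.filter (fun j => j < i), (a i - a j)^2
      = (N:ℝ) * ∑ i, a i^2 - (∑ i, a i)^2 := by
  have h1 : ∑ i, ∑ j, (a i - a j)^2
      = ∑ i, ((a i - a i)^2 + ∑ j ∈ univ.filter (fun j => j < i), (a i - a j)^2
        + ∑ j ∈ univ.filter (fun j => i < j), (a i - a j)^2) :=
    Finset.sum_congr rfl fun i _ => aux_split (fun j => (a i - a j)^2) i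
  simp only [sub_self, ne_eq, OfNat.ofNat_ne_zero, not_false_eq_true, zero_pow, zero_add,
    Finset.sum_add_distrib] at h1
  rw [aux_sym, aux_full] at h1
  linarith

open Finset in
/-- Positive definiteness of the inner product `(h,h)_λ` for surface defects in
the `O(N)` critical bulk (with `ε = 1`), together with its sum-of-squares form. -/
theorem stmt_10 (N : ℕ) (hN : 1 ≤ N) (h : Matrix (Fin N) (Fin N) ℝ)
    (hsymm : h.IsSymm) (hne : h ≠ 0) :
    0 < (((N:ℝ)+6)/((N:ℝ)+8)) * ∑ i, ∑ j, h i j ^ 2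
        - (1/((N:ℝ)+8)) * (∑ i, h i i) ^ 2 ∧
    (((N:ℝ)+6)/((N:ℝ)+8)) * ∑ i, ∑ j, h i j ^ 2
        - (1/((N:ℝ)+8)) * (∑ i, h i i) ^ 2 =
      (((N:ℝ)+6)/((N:ℝ)+8)) * (∑ i, ∑ j ∈ Finset.univ.filter (fun j => j ≠ i), h i j ^ 2)
        + (6/((N:ℝ)+8)) * (∑ i, h i i ^ 2)
        + (1/((N:ℝ)+8)) * (∑ i, ∑ j ∈ Finset.univ.filter (fun j => j < i),
            (h i i - h j j) ^ 2) := by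
  have h8 : (0:ℝ) < (N:ℝ) + 8 := by positivity
  have hS : ∑ i, ∑ j, h i j ^ 2
      = (∑ i, h i i ^ 2) + ∑ i, ∑ j ∈ univ.filter (fun j => j ≠ i), h i j ^ 2 := by
    rw [← Finset.sum_add_distrib]
    refine Finset.sum_congr rfl fun i _ => ?_
    rw [Finset.filter_ne']
    exact (Finset.add_sum_erase _ _ (mem_univ i)).symm
  have hK := aux_key (fun i => h i i)
  have heq : (((N:ℝ)+6)/((N:ℝ)+8)) * ∑ i, ∑ j, h i j ^ 2
        - (1/((N:ℝ)+8)) * (∑ i, h i i) ^ 2 =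
      (((N:ℝ)+6)/((N:ℝ)+8)) * (∑ i, ∑ j ∈ Finset.univ.filter (fun j => j ≠ i), h i j ^ 2)
        + (6/((N:ℝ)+8)) * (∑ i, h i i ^ 2)
        + (1/((N:ℝ)+8)) * (∑ i, ∑ j ∈ Finset.univ.filter (fun j => j < i),
            (h i i - h j j) ^ 2) := by
    rw [hS, hK]
    field_simp
    ring
  refine ⟨?_, heq⟩
  rw [heq]
  have hO : 0 ≤ ∑ i, ∑ j ∈ univ.filter (fun j => j ≠ i), h i j ^ 2 :=
    Finset.sum_nonneg fun i _ => Finset.sum_nonneg fun j _ => sq_nonneg _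
  have hD : 0 ≤ ∑ i, h i i ^ 2 := Finset.sum_nonneg fun i _ => sq_nonneg _
  have hP : 0 ≤ ∑ i, ∑ j ∈ univ.filter (fun j => j < i), (h i i - h j j) ^ 2 :=
    Finset.sum_nonneg fun i _ => Finset.sum_nonneg fun j _ => sq_nonneg _
  have hc : (0:ℝ) < ((N:ℝ)+6)/((N:ℝ)+8) := by positivity
  have hc6 : (0:ℝ) < 6/((N:ℝ)+8) := by positivity
  have hc1 : (0:ℝ) ≤ 1/((N:ℝ)+8) := by positivity
  obtain ⟨i, j, hij⟩ : ∃ i j, h i j ≠ 0 := by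
    by_contra hc'
    push_neg at hc'
    exact hne (Matrix.ext fun i j => by simpa using hc' i j)
  have hijpos : 0 < h i j ^ 2 := by positivity
  rcases eq_or_ne j i with rfl | hji
  · have h1 : h j j ^ 2 ≤ ∑ k, h k k ^ 2 :=
      Finset.single_le_sum (fun k _ => sq_nonneg (h k k)) (mem_univ j)
    have hDpos : 0 < ∑ k, h k k ^ 2 := lt_of_lt_of_le hijpos h1
    have := mul_pos hc6 hDpos
    have := mul_nonneg hc.le hO
    have := mul_nonneg hc1 hP
    linarith
  · have h1 : h i j ^ 2 ≤ ∑ j' ∈ univ.filter (fun j' => j' ≠ i), h i j' ^ 2 :=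
      Finset.single_le_sum (f := fun j' => h i j' ^ 2) (fun _ _ => sq_nonneg _)
        (by simp only [mem_filter, mem_univ, true_and]; exact hji)
    have h2 : (∑ j' ∈ univ.filter (fun j' => j' ≠ i), h i j' ^ 2)
        ≤ ∑ k, ∑ j' ∈ univ.filter (fun j' => j' ≠ k), h k j' ^ 2 :=
      Finset.single_le_sum (f := fun k => ∑ j' ∈ univ.filter (fun j' => j' ≠ k), h k j' ^ 2)
        (fun k _ => Finset.sum_nonneg fun _ _ => sq_nonneg _) (mem_univ i)
    have hOpos : 0 < ∑ k, ∑ j' ∈ univ.filter (fun j' => j' ≠ k), h k j' ^ 2 :=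
      lt_of_lt_of_le hijpos (h1.trans h2)
    have := mul_pos hc hOpos
    have := mul_nonneg hc6.le hD
    have := mul_nonneg hc1 hP
    linarith
end

section
/- For every integer N ≥ 1 and every nonzero symmetric matrix h ∈ ℝ^{N×N}, the quantity ((3N−2)/(3N)) Σᵢⱼ hᵢⱼ² − (1/(3N)) (Σᵢ hᵢᵢ)² − ((N−4)/(3N)) Σᵢ hᵢᵢ² is strictly positive, being equal to ((3N−2)/(3N)) Σ_{i≠j} hᵢⱼ² + ((N+2)/(3N)) Σᵢ hᵢᵢ² + (1/(3N)) Σ_{i>j} (hᵢᵢ − hⱼⱼ)². -/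
open Finset in
/-- Positive definiteness of `(h,h)_λ` for surface defects in the hypercubic
critical bulk (with `ε = 1`), together with its sum-of-squares form. -/
theorem stmt_11 (N : ℕ) (hN : 1 ≤ N) (h : Matrix (Fin N) (Fin N) ℝ)
    (hsymm : h.IsSymm) (hne : h ≠ 0) :
    0 < ((3*(N:ℝ)-2)/(3*(N:ℝ))) * ∑ i, ∑ j, h i j ^ 2
        - (1/(3*(N:ℝ))) * (∑ i, h i i) ^ 2
        - (((N:ℝ)-4)/(3*(N:ℝ))) * ∑ i, h i i ^ 2 ∧
    ((3*(N:ℝ)-2)/(3*(N:ℝ))) * ∑ i, ∑ j, h i j ^ 2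
        - (1/(3*(N:ℝ))) * (∑ i, h i i) ^ 2
        - (((N:ℝ)-4)/(3*(N:ℝ))) * ∑ i, h i i ^ 2 =
      ((3*(N:ℝ)-2)/(3*(N:ℝ))) * (∑ i, ∑ j ∈ Finset.univ.filter (fun j => j ≠ i), h i j ^ 2)
        + (((N:ℝ)+2)/(3*(N:ℝ))) * (∑ i, h i i ^ 2)
        + (1/(3*(N:ℝ))) * (∑ i, ∑ j ∈ Finset.univ.filter (fun j => j < i),
            (h i i - h j j) ^ 2) := by
  set O := ∑ i, ∑ j ∈ Finset.univ.filter (fun j => j ≠ i), h i j ^ 2 with hO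
  set D := ∑ i, h i i ^ 2 with hD
  set T := ∑ i, h i i with hT
  set Q := ∑ i, ∑ j ∈ Finset.univ.filter (fun j => j < i), (h i i - h j j) ^ 2 with hQ
  have hNpos : (0:ℝ) < N := by exact_mod_cast hN
  have h3N : (3*(N:ℝ)) ≠ 0 := by positivity
  have hS : ∑ i, ∑ j, h i j ^ 2 = O + D := by
    rw [hO, hD, ← Finset.sum_add_distrib]
    refine Finset.sum_congr rfl fun i _ => ?_
    rw [Finset.filter_ne', Finset.sum_erase_add _ _ (Finset.mem_univ i)]
  have hswap : ∑ i, ∑ j ∈ Finset.univ.filter (fun j => i < j), (h i i - h j j)^2 = Q := by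
    simp only [Finset.sum_filter]
    rw [Finset.sum_comm, hQ]
    simp only [Finset.sum_filter]
    refine Finset.sum_congr rfl fun i _ => Finset.sum_congr rfl fun j _ => ?_
    by_cases hij : j < i
    · simp [hij]; ring
    · simp [hij]
  have hF : ∑ i, ∑ j : Fin N, (h i i - h j j)^2 = 2*((N:ℝ)*D - T^2) := by
    have e1 : ∀ i : Fin N, ∑ j : Fin N, (h i i - h j j)^2
        = (N:ℝ) * h i i^2 - 2 * h i i * T + D := by
      intro i
      have e : ∀ j : Fin N, (h i i - h j j)^2
          = h i i^2 - 2 * h i i * h j j + h j j^2 := fun j => by ring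
      simp only [e]
      rw [Finset.sum_add_distrib, Finset.sum_sub_distrib, Finset.sum_const,
        ← Finset.mul_sum, ← hT, ← hD]
      simp [Finset.card_univ]
    simp only [e1]
    rw [Finset.sum_add_distrib, Finset.sum_sub_distrib, ← Finset.mul_sum, ← hD]
    have e2 : ∑ i : Fin N, 2 * h i i * T = 2 * T^2 := by
      rw [← Finset.sum_mul, ← Finset.mul_sum, ← hT]; ring
    rw [e2]
    simp [Finset.card_univ]
    ring
  have key : ∑ i, ∑ j : Fin N, (h i i - h j j)^2
      = (∑ i, ∑ j ∈ Finset.univ.filter (fun j => j < i), (h i i - h j j)^2)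
        + (∑ i, ∑ j ∈ Finset.univ.filter (fun j => i < j), (h i i - h j j)^2) := by
    simp only [Finset.sum_filter, ← Finset.sum_add_distrib]
    refine Finset.sum_congr rfl fun i _ => Finset.sum_congr rfl fun j _ => ?_
    rcases lt_trichotomy j i with hlt | heq | hgt
    · simp [hlt, hlt.asymm]
    · subst heq; simp
    · simp [hgt, hgt.asymm]
  have hsplit : ∑ i, ∑ j : Fin N, (h i i - h j j)^2 = Q + Q := by
    rw [key, hswap, ← hQ]
  have hQval : Q = (N:ℝ)*D - T^2 := by linarith [hF, hsplit]
  have heq : ((3*(N:ℝ)-2)/(3*(N:ℝ))) * ∑ i, ∑ j, h i j ^ 2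
        - (1/(3*(N:ℝ))) * T ^ 2 - (((N:ℝ)-4)/(3*(N:ℝ))) * D
      = ((3*(N:ℝ)-2)/(3*(N:ℝ))) * O + (((N:ℝ)+2)/(3*(N:ℝ))) * D
        + (1/(3*(N:ℝ))) * Q := by
    rw [hS, hQval]
    field_simp
    ring
  have hOnn : 0 ≤ O := by
    rw [hO]; exact Finset.sum_nonneg fun i _ => Finset.sum_nonneg fun j _ => sq_nonneg _
  have hDnn : 0 ≤ D := by rw [hD]; exact Finset.sum_nonneg fun i _ => sq_nonneg _
  have hQnn : 0 ≤ Q := by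
    rw [hQ]; exact Finset.sum_nonneg fun i _ => Finset.sum_nonneg fun j _ => sq_nonneg _
  have hSpos : 0 < ∑ i, ∑ j, h i j ^ 2 := by
    obtain ⟨i, j, hij⟩ : ∃ i j, h i j ≠ 0 := by
      by_contra hc; push_neg at hc
      exact hne (by ext i j; exact hc i j)
    calc (0:ℝ) < h i j ^ 2 := by positivity
    _ ≤ ∑ j', h i j' ^ 2 :=
        Finset.single_le_sum (f := fun j' => h i j' ^ 2)
          (fun k _ => sq_nonneg _) (Finset.mem_univ j)
    _ ≤ ∑ i', ∑ j', h i' j' ^ 2 :=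
        Finset.single_le_sum (f := fun i' => ∑ j', h i' j' ^ 2)
          (fun k _ => Finset.sum_nonneg fun _ _ => sq_nonneg _) (Finset.mem_univ i)
  have hODpos : 0 < O + D := hS ▸ hSpos
  have hc1 : 0 < (3*(N:ℝ)-2)/(3*(N:ℝ)) := by
    apply div_pos _ (by positivity)
    have : (1:ℝ) ≤ (N:ℝ) := by exact_mod_cast hN
    linarith
  have hc2 : 0 < ((N:ℝ)+2)/(3*(N:ℝ)) := by positivity
  have hc3 : 0 ≤ 1/(3*(N:ℝ)) := by positivity
  have hpos : 0 < ((3*(N:ℝ)-2)/(3*(N:ℝ))) * O + (((N:ℝ)+2)/(3*(N:ℝ))) * D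
      + (1/(3*(N:ℝ))) * Q := by
    rcases (lt_or_eq_of_le hOnn) with hOpos | hO0
    · have := mul_pos hc1 hOpos
      have := mul_nonneg hc2.le hDnn
      have := mul_nonneg hc3 hQnn
      linarith
    · have hDpos : 0 < D := by rw [← hO0, zero_add] at hODpos; exact hODpos
      have := mul_pos hc2 hDpos
      have := mul_nonneg hc1.le hOnn
      have := mul_nonneg hc3 hQnn
      linarith
  exact ⟨heq ▸ hpos, heq⟩
end

section
/- Define the polynomial P(g₁, g₂, k₁, k₂) = 4g₁³k₁ + 6g₁²k₂² + 12g₂g₁²k₂ + 12g₂²g₁k₁ + 6g₂²k₁² + 4g₂³k₂ + 3g₁⁴ + 12g₂²g₁² + 3g₂⁴ + k₁⁴ + k₂⁴. Then P ≥ 0 for all real g₁, g₂, k₁, k₂, with equality if and only if k₁ = −g₁ and k₂ = −g₂. -/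
/-- The quartic polynomial `P = h_{iab}h_{jbc}h_{kac}h_{ijk}` for `N = 2`
interfaces is nonnegative, vanishing exactly when `k₁ = -g₁` and `k₂ = -g₂`. -/
theorem stmt_14 (g₁ g₂ k₁ k₂ : ℝ) :
    0 ≤ 4*g₁^3*k₁ + 6*g₁^2*k₂^2 + 12*g₂*g₁^2*k₂ + 12*g₂^2*g₁*k₁ + 6*g₂^2*k₁^2
        + 4*g₂^3*k₂ + 3*g₁^4 + 12*g₂^2*g₁^2 + 3*g₂^4 + k₁^4 + k₂^4 ∧
    (4*g₁^3*k₁ + 6*g₁^2*k₂^2 + 12*g₂*g₁^2*k₂ + 12*g₂^2*g₁*k₁ + 6*g₂^2*k₁^2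
        + 4*g₂^3*k₂ + 3*g₁^4 + 12*g₂^2*g₁^2 + 3*g₂^4 + k₁^4 + k₂^4 = 0 ↔
      k₁ = -g₁ ∧ k₂ = -g₂) := by
  constructor
  · nlinarith [sq_nonneg ((k₁+g₁)*(k₁-g₁)), sq_nonneg ((k₁+g₁)*g₁),
      sq_nonneg ((k₁+g₁)*g₂), sq_nonneg ((k₂+g₂)*(k₂-g₂)),
      sq_nonneg ((k₂+g₂)*g₂), sq_nonneg ((k₂+g₂)*g₁)]
  · constructor
    · intro h
      have hu : (k₁+g₁)^4 = 0 := by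
        have h1 : (k₁+g₁)^4 ≤ 0 := by
          nlinarith [sq_nonneg ((k₁+g₁)*(k₁-2*g₁)), sq_nonneg ((k₁+g₁)*g₂),
            sq_nonneg ((k₂+g₂)*(k₂-2*g₂)), sq_nonneg ((k₂+g₂)*g₁),
            sq_nonneg (k₂+g₂), sq_nonneg ((k₂+g₂)^2)]
        have h2 : 0 ≤ (k₁+g₁)^4 := by positivity
        linarith
      have hv : (k₂+g₂)^4 = 0 := by
        have h1 : (k₂+g₂)^4 ≤ 0 := by
          nlinarith [sq_nonneg ((k₁+g₁)*(k₁-2*g₁)), sq_nonneg ((k₁+g₁)*g₂),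
            sq_nonneg ((k₂+g₂)*(k₂-2*g₂)), sq_nonneg ((k₂+g₂)*g₁),
            sq_nonneg (k₁+g₁), sq_nonneg ((k₁+g₁)^2)]
        have h2 : 0 ≤ (k₂+g₂)^4 := by positivity
        linarith
      have hu' : k₁ + g₁ = 0 := by
        have := pow_eq_zero_iff (n := 4) (by norm_num) |>.mp hu
        exact this
      have hv' : k₂ + g₂ = 0 := by
        have := pow_eq_zero_iff (n := 4) (by norm_num) |>.mp hv
        exact this
      constructor <;> linarith
    · rintro ⟨h1, h2⟩
      subst h1; subst h2; ring
end

section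
/- Let λ be a real number and consider β(h) = −(1/2)h − (1/4)h³ + 3λh (with ε = 1). The fixed points are h = 0 and h = ±√2·√(6λ−1) (real only if 6λ ≥ 1). The derivative β′(0) = 3λ − 1/2 and at a nonzero fixed point h*, β′(h*) = 1 − 6λ. Hence for 6λ > 1 the nonzero fixed points have β′(h*) < 0 (since −β generates IR flow this means a relevant direction, i.e. instability of the corresponding dCFT under the paper's sign convention where stability requires β′ > 0 at a fixed point), so there is no non-trivial unitary stable interface fixed point for N = 1. -/
/-- For the `N = 1` interface beta function `β(h) = -h/2 - h³/4 + 3λh`: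
the fixed points are `h = 0` and `h = ±√2 √(6λ-1)` (real only if `6λ ≥ 1`);
`β'(0) = 3λ - 1/2`; at any nonzero fixed point `β'(h*) = 1 - 6λ`; hence for
`6λ > 1` every nonzero fixed point has `β'(h*) < 0`, so there is no
non-trivial unitary stable interface fixed point for `N = 1`. -/
theorem stmt_17 (lam : ℝ) (β : ℝ → ℝ)
    (hβ : ∀ h, β h = -(1/2)*h - (1/4)*h^3 + 3*lam*h) :
    (∀ h, β h = 0 ↔ h = 0 ∨ (1 ≤ 6*lam ∧
      (h = Real.sqrt 2 * Real.sqrt (6*lam - 1) ∨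
        h = -(Real.sqrt 2 * Real.sqrt (6*lam - 1))))) ∧
    deriv β 0 = 3*lam - 1/2 ∧
    (∀ h, h ≠ 0 → β h = 0 → deriv β h = 1 - 6*lam) ∧
    (6*lam > 1 → ∀ h, h ≠ 0 → β h = 0 → deriv β h < 0) := by
  have hfun : β = fun h => -(1/2)*h - (1/4)*h^3 + 3*lam*h := funext hβ
  set s := Real.sqrt 2 * Real.sqrt (6*lam - 1) with hs
  have hd : ∀ x : ℝ, deriv β x = -(1/2) - (3/4)*x^2 + 3*lam := by
    intro x
    have : HasDerivAt β (-(1/2)*1 - (1/4)*((3:ℕ)*x^(3-1)) + 3*lam*1) x := by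
      rw [hfun]
      exact (((hasDerivAt_id x).const_mul (-(1/2))).sub
        ((hasDerivAt_pow 3 x).const_mul (1/4))).add ((hasDerivAt_id x).const_mul (3*lam))
    rw [this.deriv]; push_cast; ring
  have hzero : ∀ h, β h = 0 ↔ h = 0 ∨ (1 ≤ 6*lam ∧ (h = s ∨ h = -s)) := by
    intro h
    constructor
    · intro h0
      rw [hβ] at h0
      by_cases hh : h = 0
      · exact Or.inl hh
      · right
        have hsq : h^2 = 12*lam - 2 := by
          have : h * (3*lam - 1/2 - h^2/4) = 0 := by linarith [h0]
          rcases mul_eq_zero.1 this with h1 | h1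
          · exact absurd h1 hh
          · nlinarith
        have hge : (1:ℝ) ≤ 6*lam := by nlinarith [sq_nonneg h]
        have hss : s^2 = 12*lam - 2 := by
          rw [hs, mul_pow, Real.sq_sqrt (by norm_num : (2:ℝ) ≥ 0),
            Real.sq_sqrt (by linarith : 6*lam - 1 ≥ 0)]
          ring
        have : (h - s) * (h + s) = 0 := by nlinarith
        rcases mul_eq_zero.1 this with h1 | h1
        · exact ⟨hge, Or.inl (by linarith)⟩
        · exact ⟨hge, Or.inr (by linarith)⟩
    · rintro (rfl | ⟨hge, hcase⟩)
      · rw [hβ]; ring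
      · have hss : s^2 = 12*lam - 2 := by
          rw [hs, mul_pow, Real.sq_sqrt (by norm_num : (2:ℝ) ≥ 0),
            Real.sq_sqrt (by linarith : 6*lam - 1 ≥ 0)]
          ring
        rcases hcase with rfl | rfl <;> rw [hβ]
        · linear_combination (-s/4) * hss
        · linear_combination (s/4) * hss
  have hnz : ∀ h, h ≠ 0 → β h = 0 → deriv β h = 1 - 6*lam := by
    intro h hh h0
    have hsq : h^2 = 12*lam - 2 := by
      rw [hβ] at h0
      have : h * (3*lam - 1/2 - h^2/4) = 0 := by linarith [h0]
      rcases mul_eq_zero.1 this with h1 | h1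
      · exact absurd h1 hh
      · nlinarith
    rw [hd h, hsq]; ring
  refine ⟨hzero, ?_, hnz, ?_⟩
  · rw [hd 0]; ring
  · intro hgt h hh h0
    rw [hnz h hh h0]; linarith
end
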